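/- arXiv:1807.00362 — 3 statements merged into one kernel-verified Lean document; each statement's English description precedes it below -/
import Mathlib

section
/- If 0 < λ < Λ(A,B), then the fiber map ψ_λ has exactly two critical points on (0,∞), i.e. there exist 0 < t⁻ < t⁺ with ψ_λ'(t⁻) = ψ_λ'(t⁺) = 0 and ψ_λ'(t) ≠ 0 for every other t > 0; moreover ψ_λ''(t⁻) < 0, ψ_λ''(t⁺) > 0, t⁻ is a local maximum point of ψ_λ and t⁺ is a local minimum point of ψ_λ. -/
/-!
Since `ψ_λ'(t) = t·φ(t)` with `φ(t) = aA + λA²t² − B t^(γ−2)` and `0 < γ − 2 < 2`, the function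
`φ` strictly decreases up to the zero `s` of `φ'` and strictly increases afterwards, and it is
positive near `0` and near `∞`. The condition `λ < Λ(A,B)` is exactly `φ(T(A,B)) < 0`, so `φ` has
one zero on each side of `s` and no others. At these zeros `ψ_λ'' = t·φ'`, which is negative
before `s` and positive after it, and the second derivative test finishes the proof.
-/

open Real Set Filter

/-- Fiber map `ψ_λ(t) = (a/2)·A·t² + (λ/4)·A²·t⁴ − (1/γ)·B·t^γ`. -/
noncomputable def psi (a γ A B lam t : ℝ) : ℝ :=
  a / 2 * A * t ^ 2 + lam / 4 * A ^ 2 * t ^ 4 - 1 / γ * B * t ^ γ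

/-- The constant `C_{a,γ} = a·((γ−2)/(4−γ))·((4−γ)/(2a))^(2/(γ−2))`. -/
noncomputable def Cag (a γ : ℝ) : ℝ :=
  a * ((γ - 2) / (4 - γ)) * ((4 - γ) / (2 * a)) ^ (2 / (γ - 2))

/-- The extremal value `Λ(A,B) = C_{a,γ}·B^(2/(γ−2))·A^(−γ/(γ−2))`. -/
noncomputable def Lam (a γ A B : ℝ) : ℝ :=
  Cag a γ * B ^ (2 / (γ - 2)) * A ^ (-(γ / (γ - 2)))

/-- `T(A,B) = (2aA/((4−γ)B))^(1/(γ−2))`. -/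
noncomputable def Tab (a γ A B : ℝ) : ℝ :=
  (2 * a * A / ((4 - γ) * B)) ^ (1 / (γ - 2))

open Topology

theorem exists_two_zeros_of_strictAntiOn_of_strictMonoOn {f : ℝ → ℝ} {s m : ℝ} (hs : 0 < s)
    (hanti : StrictAntiOn f (Ioc 0 s)) (hmono : StrictMonoOn f (Ici s))
    (hcont : ContinuousOn f (Ioi 0)) (hm : 0 < m) (hfm : f m < 0)
    (hzero : ∀ᶠ t in 𝓝[>] 0, 0 < f t) (htop : ∀ᶠ t in atTop, 0 < f t) :
    ∃ t₁ t₂, 0 < t₁ ∧ t₁ < s ∧ s < t₂ ∧ f t₁ = 0 ∧ f t₂ = 0 ∧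
      ∀ t, 0 < t → f t = 0 → t = t₁ ∨ t = t₂ := by
  have hfs : f s < 0 := by
    rcases le_total m s with hms | hsm
    · exact (hanti.antitoneOn ⟨hm, hms⟩ ⟨hs, le_rfl⟩ hms).trans_lt hfm
    · exact (hmono.monotoneOn self_mem_Ici hsm hsm).trans_lt hfm
  obtain ⟨p, hfp, hp⟩ := (hzero.and (Ioo_mem_nhdsGT hs)).exists
  obtain ⟨q, hfq, hq⟩ := (htop.and (eventually_gt_atTop s)).exists
  obtain ⟨t₁, ht₁, hft₁⟩ := intermediate_value_Ioo' hp.2.le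
    (hcont.mono fun x hx => hp.1.trans_le hx.1) ⟨hfs, hfp⟩
  obtain ⟨t₂, ht₂, hft₂⟩ := intermediate_value_Ioo hq.le
    (hcont.mono fun x hx => hs.trans_le hx.1) ⟨hfs, hfq⟩
  have ht₁pos : 0 < t₁ := hp.1.trans ht₁.1
  refine ⟨t₁, t₂, ht₁pos, ht₁.2, ht₂.1, hft₁, hft₂, fun t ht hft => ?_⟩
  rcases le_or_gt t s with hts | hst
  · exact .inl (hanti.injOn ⟨ht, hts⟩ ⟨ht₁pos, ht₁.2.le⟩ (hft.trans hft₁.symm))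
  · exact .inr (hmono.injOn hst.le ht₂.1.le (hft.trans hft₂.symm))

noncomputable def phi (k c b q t : ℝ) : ℝ :=
  k + c * t ^ 2 - b * t ^ q

noncomputable def phiCrit (c b q : ℝ) : ℝ :=
  (b * q / (2 * c)) ^ (1 / (2 - q))

section Phi

variable {k c b q t : ℝ}

theorem hasDerivAt_phi (ht : t ≠ 0) :
    HasDerivAt (phi k c b q) (2 * c * t - b * q * t ^ (q - 1)) t := by
  have hsq : HasDerivAt (fun s : ℝ => s ^ 2) (2 * t) t := by simpa using hasDerivAt_pow 2 t
  exact (((hasDerivAt_const t k).add (hsq.const_mul c)).sub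
    ((hasDerivAt_rpow_const (p := q) (Or.inl ht)).const_mul b)).congr_deriv (by ring)

theorem continuousOn_phi : ContinuousOn (phi k c b q) (Ioi 0) :=
  fun _ ht => (hasDerivAt_phi (ne_of_gt ht)).continuousAt.continuousWithinAt

theorem deriv_phi_eq (ht : 0 < t) :
    2 * c * t - b * q * t ^ (q - 1) = t ^ (q - 1) * (2 * c * t ^ (2 - q) - b * q) := by
  have hsplit : t ^ (q - 1) * t ^ (2 - q) = t := by
    rw [← rpow_add ht, show q - 1 + (2 - q) = 1 by ring, rpow_one]
  linear_combination (-2 * c) * hsplit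

theorem phiCrit_pos (hc : 0 < c) (hb : 0 < b) (hq0 : 0 < q) : 0 < phiCrit c b q :=
  rpow_pos_of_pos (by positivity) _

theorem phiCrit_rpow (hc : 0 < c) (hb : 0 < b) (hq0 : 0 < q) (hq2 : q < 2) :
    phiCrit c b q ^ (2 - q) = b * q / (2 * c) := by
  rw [phiCrit, ← rpow_mul (by positivity), one_div_mul_cancel (by linarith), rpow_one]

theorem deriv_phi_neg (hc : 0 < c) (hb : 0 < b) (hq0 : 0 < q) (hq2 : q < 2) (ht : 0 < t)
    (hts : t < phiCrit c b q) : 2 * c * t - b * q * t ^ (q - 1) < 0 := by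
  have hlt := rpow_lt_rpow ht.le hts (sub_pos.2 hq2)
  rw [phiCrit_rpow hc hb hq0 hq2, lt_div_iff₀ (by positivity)] at hlt
  rw [deriv_phi_eq ht]
  exact mul_neg_of_pos_of_neg (rpow_pos_of_pos ht _) (by linarith)

theorem deriv_phi_pos (hc : 0 < c) (hb : 0 < b) (hq0 : 0 < q) (hq2 : q < 2)
    (hst : phiCrit c b q < t) : 0 < 2 * c * t - b * q * t ^ (q - 1) := by
  have hs := phiCrit_pos hc hb hq0
  have hlt := rpow_lt_rpow hs.le hst (sub_pos.2 hq2)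
  rw [phiCrit_rpow hc hb hq0 hq2, div_lt_iff₀ (by positivity)] at hlt
  rw [deriv_phi_eq (hs.trans hst)]
  exact mul_pos (rpow_pos_of_pos (hs.trans hst) _) (by linarith)

theorem strictAntiOn_phi (hc : 0 < c) (hb : 0 < b) (hq0 : 0 < q) (hq2 : q < 2) :
    StrictAntiOn (phi k c b q) (Ioc 0 (phiCrit c b q)) := by
  refine strictAntiOn_of_deriv_neg (convex_Ioc _ _)
    (continuousOn_phi.mono Ioc_subset_Ioi_self) fun t ht => ?_
  rw [interior_Ioc] at ht
  rw [(hasDerivAt_phi (ne_of_gt ht.1)).deriv]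
  exact deriv_phi_neg hc hb hq0 hq2 ht.1 ht.2

theorem strictMonoOn_phi (hc : 0 < c) (hb : 0 < b) (hq0 : 0 < q) (hq2 : q < 2) :
    StrictMonoOn (phi k c b q) (Ici (phiCrit c b q)) := by
  have hs := phiCrit_pos hc hb hq0
  refine strictMonoOn_of_deriv_pos (convex_Ici _)
    (continuousOn_phi.mono fun t ht => hs.trans_le ht) fun t ht => ?_
  rw [interior_Ici] at ht
  rw [(hasDerivAt_phi (ne_of_gt (hs.trans ht))).deriv]
  exact deriv_phi_pos hc hb hq0 hq2 ht

theorem eventually_phi_pos_nhdsGT (hq0 : 0 < q) (hk : 0 < k) :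
    ∀ᶠ t in 𝓝[>] 0, 0 < phi k c b q t := by
  have hcont : ContinuousAt (phi k c b q) 0 :=
    (continuousAt_const.add (continuousAt_const.mul (continuous_pow 2).continuousAt)).sub
      (continuousAt_const.mul (continuousAt_rpow_const 0 q (Or.inr hq0.le)))
  have hphi0 : phi k c b q 0 = k := by simp [phi, zero_rpow hq0.ne']
  exact nhdsWithin_le_nhds (hcont.eventually (lt_mem_nhds (by rwa [hphi0])))

theorem eventually_phi_pos_atTop (hc : 0 < c) (hq2 : q < 2) (hk : 0 < k) :
    ∀ᶠ t in atTop, 0 < phi k c b q t := by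
  filter_upwards [(tendsto_rpow_atTop (sub_pos.2 hq2)).eventually_gt_atTop (b / c),
    eventually_gt_atTop 0] with t hbig ht
  rw [div_lt_iff₀' hc] at hbig
  have hsplit : t ^ 2 = t ^ q * t ^ (2 - q) := by
    rw [← rpow_add ht, add_sub_cancel, rpow_two]
  have hpos : 0 < t ^ q * (c * t ^ (2 - q) - b) :=
    mul_pos (rpow_pos_of_pos ht _) (by linarith)
  rw [phi, hsplit]
  linarith

end Phi

section Psi

variable {a γ A B lam t : ℝ}

theorem hasDerivAt_psi (hγ : γ ≠ 0) (ht : t ≠ 0) :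
    HasDerivAt (psi a γ A B lam) (t * phi (a * A) (lam * A ^ 2) B (γ - 2) t) t := by
  have hsq : HasDerivAt (fun s : ℝ => s ^ 2) (2 * t) t := by simpa using hasDerivAt_pow 2 t
  have hquart : HasDerivAt (fun s : ℝ => s ^ 4) (4 * t ^ 3) t := by
    simpa using hasDerivAt_pow 4 t
  have hrpow : t ^ (γ - 1) = t ^ (γ - 2) * t := by
    rw [← rpow_add_one ht]
    congr 1
    ring
  refine (((hsq.const_mul (a / 2 * A)).add (hquart.const_mul (lam / 4 * A ^ 2))).sub
    ((hasDerivAt_rpow_const (p := γ) (Or.inl ht)).const_mul (1 / γ * B))).congr_deriv ?_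
  rw [hrpow, phi]
  field_simp

theorem deriv_psi_eventuallyEq (hγ : γ ≠ 0) (ht : t ≠ 0) :
    deriv (psi a γ A B lam) =ᶠ[𝓝 t] fun s => s * phi (a * A) (lam * A ^ 2) B (γ - 2) s :=
  (eventually_ne_nhds ht).mono fun _ hs => (hasDerivAt_psi hγ hs).deriv

theorem deriv_deriv_psi (hγ : γ ≠ 0) (ht : t ≠ 0) :
    deriv (deriv (psi a γ A B lam)) t = phi (a * A) (lam * A ^ 2) B (γ - 2) t +
      t * (2 * (lam * A ^ 2) * t - B * (γ - 2) * t ^ (γ - 2 - 1)) := by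
  rw [(deriv_psi_eventuallyEq hγ ht).deriv_eq]
  exact ((hasDerivAt_id' t).mul (hasDerivAt_phi ht)).deriv.trans (by ring)

end Psi

section Extremal

variable {a γ A B lam : ℝ}

theorem Tab_pos (ha : 0 < a) (hγ4 : γ < 4) (hA : 0 < A) (hB : 0 < B) : 0 < Tab a γ A B := by
  have := sub_pos.2 hγ4
  exact rpow_pos_of_pos (by positivity) _

theorem Tab_rpow_sub_two (ha : 0 < a) (hγ2 : 2 < γ) (hγ4 : γ < 4) (hA : 0 < A) (hB : 0 < B) :
    Tab a γ A B ^ (γ - 2) = 2 * a * A / ((4 - γ) * B) := by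
  have := sub_pos.2 hγ4
  rw [Tab, ← rpow_mul (by positivity), one_div_mul_cancel (by linarith), rpow_one]

theorem Tab_sq (ha : 0 < a) (hγ4 : γ < 4) (hA : 0 < A) (hB : 0 < B) :
    Tab a γ A B ^ 2 = (2 * a * A / ((4 - γ) * B)) ^ (2 / (γ - 2)) := by
  have := sub_pos.2 hγ4
  rw [Tab, ← rpow_natCast, ← rpow_mul (by positivity)]
  congr 1
  push_cast
  ring

theorem Lam_mul_sq_Tab (ha : 0 < a) (hγ2 : 2 < γ) (hγ4 : γ < 4) (hA : 0 < A) (hB : 0 < B) :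
    Lam a γ A B * (A ^ 2 * Tab a γ A B ^ 2) = a * A * ((γ - 2) / (4 - γ)) := by
  have h4 := sub_pos.2 hγ4
  have h2 := sub_pos.2 hγ2
  have hbase : (4 - γ) / (2 * a) * B * (2 * a * A / ((4 - γ) * B)) = A := by field_simp
  calc Lam a γ A B * (A ^ 2 * Tab a γ A B ^ 2)
      = a * ((γ - 2) / (4 - γ)) * ((4 - γ) / (2 * a) * B * (2 * a * A / ((4 - γ) * B))) ^ (2 / (γ - 2)) *
          A ^ (-(γ / (γ - 2))) * A ^ (2 : ℝ) := by
        rw [Lam, Cag, Tab_sq ha hγ4 hA hB, mul_rpow (by positivity) (by positivity),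
          mul_rpow (by positivity) hB.le, rpow_two]
        ring
    _ = a * ((γ - 2) / (4 - γ)) * A ^ (2 / (γ - 2) + -(γ / (γ - 2)) + 2) := by
        rw [hbase, rpow_add hA, rpow_add hA]
        ring
    _ = a * A * ((γ - 2) / (4 - γ)) := by
        rw [show 2 / (γ - 2) + -(γ / (γ - 2)) + 2 = 1 by field_simp; ring, rpow_one]
        ring

/-- For `λ = Λ(A,B)` the minimum of `φ` is attained at `T(A,B)` and equals `0`: this is where
`Λ` and `T` come from. -/
theorem phi_Tab_neg (ha : 0 < a) (hγ2 : 2 < γ) (hγ4 : γ < 4) (hA : 0 < A) (hB : 0 < B)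
    (hlt : lam < Lam a γ A B) : phi (a * A) (lam * A ^ 2) B (γ - 2) (Tab a γ A B) < 0 := by
  have h4 := sub_pos.2 hγ4
  have hlam : lam * (A ^ 2 * Tab a γ A B ^ 2) < a * A * ((γ - 2) / (4 - γ)) := by
    rw [← Lam_mul_sq_Tab ha hγ2 hγ4 hA hB]
    exact mul_lt_mul_of_pos_right hlt (mul_pos (pow_pos hA 2) (pow_pos (Tab_pos ha hγ4 hA hB) 2))
  have hBT : B * Tab a γ A B ^ (γ - 2) = 2 * a * A / (4 - γ) := by
    rw [Tab_rpow_sub_two ha hγ2 hγ4 hA hB]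
    field_simp
  have hsum : a * A + a * A * ((γ - 2) / (4 - γ)) = 2 * a * A / (4 - γ) := by
    field_simp
    ring
  rw [phi, hBT]
  linarith

end Extremal

/-- for `0 < λ < Λ(A,B)` the fiber map `ψ_λ` has exactly two critical
points `0 < t⁻ < t⁺` on `(0,∞)`, with `ψ_λ''(t⁻) < 0`, `ψ_λ''(t⁺) > 0`, `t⁻` a local
maximum point and `t⁺` a local minimum point. -/
theorem stmt_1 (a γ A B lam : ℝ) (ha : 0 < a) (hγ2 : 2 < γ) (hγ4 : γ < 4)
    (hA : 0 < A) (hB : 0 < B) (hlam : 0 < lam) (hlt : lam < Lam a γ A B) :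
    ∃ tminus tplus : ℝ, 0 < tminus ∧ tminus < tplus ∧
      deriv (psi a γ A B lam) tminus = 0 ∧
      deriv (psi a γ A B lam) tplus = 0 ∧
      (∀ t : ℝ, 0 < t → deriv (psi a γ A B lam) t = 0 → t = tminus ∨ t = tplus) ∧
      deriv (deriv (psi a γ A B lam)) tminus < 0 ∧
      0 < deriv (deriv (psi a γ A B lam)) tplus ∧
      IsLocalMax (psi a γ A B lam) tminus ∧
      IsLocalMin (psi a γ A B lam) tplus := by
  have hγ0 : γ ≠ 0 := by linarith
  have hc : 0 < lam * A ^ 2 := by positivity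
  have hq0 : 0 < γ - 2 := by linarith
  have hq2 : γ - 2 < 2 := by linarith
  obtain ⟨t₁, t₂, ht₁, ht₁s, hst₂, hφt₁, hφt₂, honly⟩ :=
    exists_two_zeros_of_strictAntiOn_of_strictMonoOn (phiCrit_pos hc hB hq0)
      (strictAntiOn_phi hc hB hq0 hq2) (strictMonoOn_phi hc hB hq0 hq2) continuousOn_phi
      (Tab_pos ha hγ4 hA hB) (phi_Tab_neg ha hγ2 hγ4 hA hB hlt)
      (eventually_phi_pos_nhdsGT hq0 (by positivity))
      (eventually_phi_pos_atTop hc hq2 (by positivity))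
  have ht₂ : 0 < t₂ := ht₁.trans (ht₁s.trans hst₂)
  have hderiv : ∀ t, 0 < t →
      deriv (psi a γ A B lam) t = t * phi (a * A) (lam * A ^ 2) B (γ - 2) t :=
    fun t ht => (hasDerivAt_psi hγ0 ht.ne').deriv
  have hd₁ : deriv (psi a γ A B lam) t₁ = 0 := by rw [hderiv t₁ ht₁, hφt₁, mul_zero]
  have hd₂ : deriv (psi a γ A B lam) t₂ = 0 := by rw [hderiv t₂ ht₂, hφt₂, mul_zero]
  have hdd₁ : deriv (deriv (psi a γ A B lam)) t₁ < 0 := by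
    rw [deriv_deriv_psi hγ0 ht₁.ne', hφt₁, zero_add]
    exact mul_neg_of_pos_of_neg ht₁ (deriv_phi_neg hc hB hq0 hq2 ht₁ ht₁s)
  have hdd₂ : 0 < deriv (deriv (psi a γ A B lam)) t₂ := by
    rw [deriv_deriv_psi hγ0 ht₂.ne', hφt₂, zero_add]
    exact mul_pos ht₂ (deriv_phi_pos hc hB hq0 hq2 hst₂)
  refine ⟨t₁, t₂, ht₁, ht₁s.trans hst₂, hd₁, hd₂, fun t ht hdt => honly t ht ?_, hdd₁, hdd₂,
    isLocalMax_of_deriv_deriv_neg hdd₁ hd₁ (hasDerivAt_psi hγ0 ht₁.ne').continuousAt,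
    isLocalMin_of_deriv_deriv_pos hdd₂ hd₂ (hasDerivAt_psi hγ0 ht₂.ne').continuousAt⟩
  rw [hderiv t ht] at hdt
  exact (mul_eq_zero.1 hdt).resolve_left ht.ne'
end

section
/- In the unknowns (t, λ) ∈ (0,∞) × (0,∞), the system ψ_λ(t) = 0 and ψ_λ'(t) = 0 (equivalently (a/2)A + (λ/4)t²A² = (1/γ)t^(γ−2)B and aA + λt²A² = t^(γ−2)B) has exactly one solution, namely t₀ = (γaA/((4−γ)B))^(1/(γ−2)) and λ₀ = Λ₀(A,B) = 2·(2/γ)^(2/(γ−2))·Λ(A,B). -/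
open Real Set Filter

/-- Both equations are linear in `λ t² A²` and `t^(γ−2) B`, and this linear system is
nondegenerate for `γ ≠ 4`. -/
theorem fiber_system_iff {a γ A B t lam : ℝ} (hγ0 : γ ≠ 0) (hγ4 : γ ≠ 4) :
    (a / 2 * A + lam / 4 * t ^ 2 * A ^ 2 = 1 / γ * t ^ (γ - 2) * B ∧
        a * A + lam * t ^ 2 * A ^ 2 = t ^ (γ - 2) * B) ↔
      (t ^ (γ - 2) * B = γ * a * A / (4 - γ) ∧
        lam * t ^ 2 * A ^ 2 = 2 * (γ - 2) * a * A / (4 - γ)) := by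
  have h4 : 4 - γ ≠ 0 := sub_ne_zero.mpr (Ne.symm hγ4)
  rw [show 1 / γ * t ^ (γ - 2) * B = t ^ (γ - 2) * B / γ by ring, eq_div_iff hγ0,
    eq_div_iff h4, eq_div_iff h4]
  constructor
  · rintro ⟨h1, h2⟩
    exact ⟨by linear_combination (-4) * h1 + γ * h2, by linear_combination (-4) * h1 + 4 * h2⟩
  · rintro ⟨h1, h2⟩
    have h2' : a * A + lam * t ^ 2 * A ^ 2 = t ^ (γ - 2) * B :=
      mul_left_cancel₀ h4 (by linear_combination h2 - h1)
    exact ⟨by linear_combination (γ / 4) * h2' - (1 / 4) * h1, h2'⟩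

theorem Cag_pos {a γ : ℝ} (ha : 0 < a) (hγ2 : 2 < γ) (hγ4 : γ < 4) : 0 < Cag a γ := by
  have h4 : 0 < 4 - γ := by linarith
  have hq : 0 < γ - 2 := by linarith
  unfold Cag
  positivity

theorem Lam_pos {a γ A B : ℝ} (ha : 0 < a) (hγ2 : 2 < γ) (hγ4 : γ < 4) (hA : 0 < A)
    (hB : 0 < B) : 0 < Lam a γ A B := by
  have := Cag_pos ha hγ2 hγ4
  unfold Lam
  positivity

/-- With `K = γaA/((4−γ)B)` and `t₀ = K^(1/(γ−2))`, the powers of `(2/γ)`, `(4−γ)/(2a)`, `B` and `K`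
in `λ₀ t₀²` combine into `A^(2/(γ−2))`, which cancels against `A^(−γ/(γ−2)) A²` up to one factor
of `A`. -/
theorem two_mul_rpow_mul_Lam_mul_sq_mul_sq {a γ A B : ℝ} (ha : 0 < a) (hγ2 : 2 < γ)
    (hγ4 : γ < 4) (hA : 0 < A) (hB : 0 < B) :
    2 * (2 / γ) ^ (2 / (γ - 2)) * Lam a γ A B *
        ((γ * a * A / ((4 - γ) * B)) ^ (1 / (γ - 2))) ^ 2 * A ^ 2 =
      2 * (γ - 2) * a * A / (4 - γ) := by
  have h4 : 0 < 4 - γ := by linarith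
  have hq : γ - 2 ≠ 0 := by linarith
  set K := γ * a * A / ((4 - γ) * B) with hK_def
  have hK : 0 < K := by positivity
  have hsq : (K ^ (1 / (γ - 2))) ^ 2 = K ^ (2 / (γ - 2)) := by
    rw [← rpow_natCast, ← rpow_mul hK.le]
    ring_nf
  have hbase : 2 / γ * ((4 - γ) / (2 * a)) * B * K = A := by
    rw [hK_def]
    field_simp
  have hpow : (2 / γ) ^ (2 / (γ - 2)) * ((4 - γ) / (2 * a)) ^ (2 / (γ - 2)) *
      B ^ (2 / (γ - 2)) * K ^ (2 / (γ - 2)) = A ^ (2 / (γ - 2)) := by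
    rw [← mul_rpow (by positivity) (by positivity), ← mul_rpow (by positivity) hB.le,
      ← mul_rpow (by positivity) hK.le, hbase]
  have hexp : A ^ (2 / (γ - 2)) * A ^ (-(γ / (γ - 2))) * A ^ 2 = A := by
    rw [← rpow_natCast, ← rpow_add hA, ← rpow_add hA]
    convert rpow_one A using 2
    field_simp
    ring
  rw [hsq, Lam, Cag]
  linear_combination (2 * a * ((γ - 2) / (4 - γ)) * A ^ (-(γ / (γ - 2))) * A ^ 2) * hpow +
    (2 * a * ((γ - 2) / (4 - γ))) * hexp

/-- in the unknowns `(t, λ) ∈ (0,∞) × (0,∞)`, the system `ψ_λ(t) = 0`,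
`ψ_λ'(t) = 0`, written equivalently as `(a/2)A + (λ/4)t²A² = (1/γ)t^(γ−2)B` and
`aA + λt²A² = t^(γ−2)B`, has exactly one solution, namely
`t₀ = (γaA/((4−γ)B))^(1/(γ−2))` and `λ₀ = Λ₀(A,B) = 2·(2/γ)^(2/(γ−2))·Λ(A,B)`. -/
theorem stmt_8 (a γ A B : ℝ) (ha : 0 < a) (hγ2 : 2 < γ) (hγ4 : γ < 4)
    (hA : 0 < A) (hB : 0 < B) :
    0 < (γ * a * A / ((4 - γ) * B)) ^ (1 / (γ - 2)) ∧
    0 < 2 * (2 / γ) ^ (2 / (γ - 2)) * Lam a γ A B ∧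
    ∀ t lam : ℝ, 0 < t → 0 < lam →
      ((a / 2 * A + lam / 4 * t ^ 2 * A ^ 2 = 1 / γ * t ^ (γ - 2) * B ∧
        a * A + lam * t ^ 2 * A ^ 2 = t ^ (γ - 2) * B) ↔
       (t = (γ * a * A / ((4 - γ) * B)) ^ (1 / (γ - 2)) ∧
        lam = 2 * (2 / γ) ^ (2 / (γ - 2)) * Lam a γ A B)) := by
  have h4 : 0 < 4 - γ := by linarith
  have hK : 0 < γ * a * A / ((4 - γ) * B) := by positivity
  have hlam₀ : 0 < 2 * (2 / γ) ^ (2 / (γ - 2)) * Lam a γ A B := by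
    have := Lam_pos ha hγ2 hγ4 hA hB
    positivity
  refine ⟨rpow_pos_of_pos hK _, hlam₀, fun t lam ht _ => ?_⟩
  have hroot : t ^ (γ - 2) * B = γ * a * A / (4 - γ) ↔
      t = (γ * a * A / ((4 - γ) * B)) ^ (1 / (γ - 2)) := by
    rw [one_div, eq_rpow_inv ht.le hK.le (by linarith), ← div_div, eq_div_iff hB.ne']
  rw [fiber_system_iff (by linarith) (by linarith), hroot]
  have hlam₀_value := two_mul_rpow_mul_Lam_mul_sq_mul_sq ha hγ2 hγ4 hA hB
  constructor
  · rintro ⟨ht₀, h⟩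
    rw [← ht₀] at hlam₀_value
    refine ⟨ht₀, mul_right_cancel₀ (by positivity : t ^ 2 * A ^ 2 ≠ 0) ?_⟩
    rw [← mul_assoc, ← mul_assoc, h, hlam₀_value]
  · rintro ⟨rfl, rfl⟩
    exact ⟨rfl, hlam₀_value⟩
end

section
/- If 0 < λ < Λ₀(A,B), then there exists t > 0 with ψ_λ(t) < 0, so that the infimum of ψ_λ over (0,∞) is negative; if λ ≥ Λ₀(A,B), then ψ_λ(t) ≥ 0 for all t > 0 and the infimum of ψ_λ over (0,∞) equals 0. -/
open Real Set Filter

/-- The zero-energy value `Λ₀(A,B) = 2·(2/γ)^(2/(γ−2))·Λ(A,B)`. -/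
noncomputable def Lam0 (a γ A B : ℝ) : ℝ :=
  2 * (2 / γ) ^ (2 / (γ - 2)) * Lam a γ A B


/-!
Let `T > 0` satisfy `T ^ (γ - 2) = aγA/((4 - γ)B)`. Then `Λ₀ = 2a(γ - 2)/((4 - γ)AT²)`, and
`ψ_{Λ₀}(t) = (B/γ)·(θ T^(γ-2) t² + (1 - θ) T^(γ-4) t⁴ - t^γ)` with `θ = (4 - γ)/2`, which is
nonnegative by the weighted AM-GM inequality (since `γ = 2θ + 4(1 - θ)`) and vanishes at `t = T`.
As `ψ_λ - ψ_{Λ₀} = (λ - Λ₀)A²t⁴/4`, we get `ψ_λ(T) < 0` for `λ < Λ₀` and `ψ_λ ≥ 0` for `λ ≥ Λ₀`.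
The infimum is then `0` in the second case because `ψ_λ(t) → ψ_λ(0) = 0` as `t → 0⁺`, and it is
finite (so Lean's `sInf` is the true infimum) in the first because `t⁴` dominates `t^γ`.
-/

theorem rpow_le_mul_rpow_add_mul_rpow {p q r s t : ℝ} (hpr : p ≤ r) (hrq : r ≤ q) (hpq : p < q)
    (hs : 0 < s) (ht : 0 < t) :
    t ^ r ≤ (q - r) / (q - p) * s ^ (r - p) * t ^ p + (r - p) / (q - p) * s ^ (r - q) * t ^ q := by
  have hqp : q - p ≠ 0 := (sub_pos.2 hpq).ne'
  have hgm := Real.geom_mean_le_arith_mean2_weighted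
    (div_nonneg (sub_nonneg.2 hrq) (sub_pos.2 hpq).le)
    (div_nonneg (sub_nonneg.2 hpr) (sub_pos.2 hpq).le)
    (by positivity : 0 ≤ s ^ (r - p) * t ^ p) (by positivity : 0 ≤ s ^ (r - q) * t ^ q)
    (by field_simp; ring)
  convert hgm using 1
  · rw [Real.mul_rpow (by positivity) (by positivity), Real.mul_rpow (by positivity) (by positivity),
      ← Real.rpow_mul hs.le, ← Real.rpow_mul ht.le, ← Real.rpow_mul hs.le, ← Real.rpow_mul ht.le,
      mul_mul_mul_comm, ← Real.rpow_add hs, ← Real.rpow_add ht]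
    have hs_exp : (r - p) * ((q - r) / (q - p)) + (r - q) * ((r - p) / (q - p)) = 0 := by
      field_simp; ring
    have ht_exp : p * ((q - r) / (q - p)) + q * ((r - p) / (q - p)) = r := by
      field_simp; ring
    rw [hs_exp, ht_exp, Real.rpow_zero, one_mul]
  · ring

theorem csInf_image_Ioi_le_of_continuousWithinAt {f : ℝ → ℝ} {x : ℝ}
    (hf : ContinuousWithinAt f (Ioi x) x) (hbdd : BddBelow (f '' Ioi x)) :
    sInf (f '' Ioi x) ≤ f x :=
  ge_of_tendsto hf (eventually_nhdsWithin_of_forall fun _ ht => csInf_le hbdd ⟨_, ht, rfl⟩)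

noncomputable def Tzero (a γ A B : ℝ) : ℝ :=
  (a * γ * A / ((4 - γ) * B)) ^ (γ - 2)⁻¹

theorem psi_eq_psi_add (a γ A B lam mu t : ℝ) :
    psi a γ A B lam t = psi a γ A B mu t + (lam - mu) / 4 * A ^ 2 * t ^ 4 := by
  unfold psi; ring

theorem continuous_psi {γ : ℝ} (a A B lam : ℝ) (hγ : 0 ≤ γ) : Continuous (psi a γ A B lam) := by
  unfold psi
  have := Real.continuous_rpow_const hγ
  fun_prop

theorem psi_zero {γ : ℝ} (a A B lam : ℝ) (hγ : γ ≠ 0) : psi a γ A B lam 0 = 0 := by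
  simp [psi, Real.zero_rpow hγ]

section Fiber

variable {a γ A B : ℝ}
variable (ha : 0 < a) (hγ2 : 2 < γ) (hγ4 : γ < 4) (hA : 0 < A) (hB : 0 < B)
include ha hγ2 hγ4 hA hB

theorem Tzero_pos : 0 < Tzero a γ A B := by
  unfold Tzero
  have : 0 < 4 - γ := by linarith
  positivity

theorem Tzero_rpow : Tzero a γ A B ^ (γ - 2) = a * γ * A / ((4 - γ) * B) := by
  have : 0 < 4 - γ := by linarith
  exact Real.rpow_inv_rpow (by positivity) (by linarith)

theorem Lam0_eq : Lam0 a γ A B = 2 * a * (γ - 2) / ((4 - γ) * A * Tzero a γ A B ^ 2) := by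
  have h4 : 0 < 4 - γ := by linarith
  have h2 : γ - 2 ≠ 0 := by linarith
  set k := 2 / (γ - 2)
  set X := a * γ * A / ((4 - γ) * B)
  have hX : 0 < X := by positivity
  have hT : Tzero a γ A B ^ 2 = X ^ k := by
    rw [Tzero, ← Real.rpow_mul_natCast hX.le]
    congr 1
    simp only [k]; field_simp; norm_num
  have hcoef : (2 / γ) ^ k * ((4 - γ) / (2 * a)) ^ k * B ^ k = A ^ k / X ^ k := by
    rw [← Real.mul_rpow (by positivity) (by positivity), ← Real.mul_rpow (by positivity) hB.le,
      ← Real.div_rpow hA.le hX.le]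
    congr 1
    simp only [X]; field_simp
  have hApow : A ^ (-(γ / (γ - 2))) = (A * A ^ k)⁻¹ := by
    rw [show -(γ / (γ - 2)) = -(1 + k) by simp only [k]; field_simp; ring,
      Real.rpow_neg hA.le, Real.rpow_add hA, Real.rpow_one]
  have hAk : A ^ k ≠ 0 := (Real.rpow_pos_of_pos hA k).ne'
  calc Lam0 a γ A B
      = 2 * a * (γ - 2) / (4 - γ) * ((2 / γ) ^ k * ((4 - γ) / (2 * a)) ^ k * B ^ k)
          * (A * A ^ k)⁻¹ := by
        rw [Lam0, Lam, Cag, hApow]; ring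
    _ = _ := by
        rw [hcoef, hT]
        field_simp

theorem psi_Lam0_eq (t : ℝ) :
    psi a γ A B (Lam0 a γ A B) t = 1 / γ * B *
      ((4 - γ) / 2 * Tzero a γ A B ^ (γ - 2) * t ^ 2
        + (γ - 2) / 2 * Tzero a γ A B ^ (γ - 4) * t ^ 4 - t ^ γ) := by
  have hT := Tzero_pos ha hγ2 hγ4 hA hB
  have h4 : 0 < 4 - γ := by linarith
  rw [show γ - 4 = (γ - 2) - 2 by ring, Real.rpow_sub hT (γ - 2) 2, Real.rpow_two,
    Tzero_rpow ha hγ2 hγ4 hA hB, Lam0_eq ha hγ2 hγ4 hA hB, psi]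
  field_simp
  ring

theorem psi_Lam0_nonneg {t : ℝ} (ht : 0 < t) : 0 ≤ psi a γ A B (Lam0 a γ A B) t := by
  have key := rpow_le_mul_rpow_add_mul_rpow (by linarith : (2:ℝ) ≤ γ) (by linarith : γ ≤ (4:ℝ))
    (by norm_num) (Tzero_pos ha hγ2 hγ4 hA hB) ht
  rw [Real.rpow_two, Real.rpow_ofNat, show (4:ℝ) - 2 = 2 by norm_num] at key
  rw [psi_Lam0_eq ha hγ2 hγ4 hA hB]
  have : 0 < γ := by linarith
  apply mul_nonneg (by positivity)
  linarith

theorem psi_Lam0_Tzero : psi a γ A B (Lam0 a γ A B) (Tzero a γ A B) = 0 := by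
  have hT := Tzero_pos ha hγ2 hγ4 hA hB
  rw [psi_Lam0_eq ha hγ2 hγ4 hA hB, ← Real.rpow_two, ← Real.rpow_ofNat, mul_assoc _ (_ ^ (γ - 2)),
    mul_assoc _ (_ ^ (γ - 4)), ← Real.rpow_add hT, ← Real.rpow_add hT,
    sub_add_cancel, sub_add_cancel]
  ring

theorem psi_Tzero_neg {lam : ℝ} (hlam : lam < Lam0 a γ A B) :
    psi a γ A B lam (Tzero a γ A B) < 0 := by
  have hT := Tzero_pos ha hγ2 hγ4 hA hB
  have hlin : (lam - Lam0 a γ A B) / 4 * A ^ 2 * Tzero a γ A B ^ 4 < 0 :=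
    mul_neg_of_neg_of_pos (mul_neg_of_neg_of_pos (by linarith) (by positivity)) (by positivity)
  rw [psi_eq_psi_add _ _ _ _ lam (Lam0 a γ A B), psi_Lam0_Tzero ha hγ2 hγ4 hA hB]
  linarith

theorem psi_nonneg_of_Lam0_le {lam t : ℝ} (hlam : Lam0 a γ A B ≤ lam) (ht : 0 < t) :
    0 ≤ psi a γ A B lam t := by
  have hlin : 0 ≤ (lam - Lam0 a γ A B) / 4 * A ^ 2 * t ^ 4 :=
    mul_nonneg (mul_nonneg (by linarith) (by positivity)) (by positivity)
  rw [psi_eq_psi_add _ _ _ _ lam (Lam0 a γ A B)]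
  linarith [psi_Lam0_nonneg ha hγ2 hγ4 hA hB ht]

end Fiber

/-- Interpolating `t ^ γ` between `t ^ 0` and `t ^ 4` at the point `s` with
`s ^ (γ - 4) = λA²/B` bounds `t ^ γ / γ` by a constant plus exactly the quartic term of `ψ_λ`. -/
theorem bddBelow_psi_image {a γ A B lam : ℝ} (ha : 0 ≤ a) (hγ0 : 0 < γ) (hγ4 : γ < 4)
    (hA : 0 < A) (hB : 0 < B) (hlam : 0 < lam) :
    BddBelow (psi a γ A B lam '' Ioi 0) := by
  set s := (lam * A ^ 2 / B) ^ (γ - 4)⁻¹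
  have hs : s ^ (γ - 4) = lam * A ^ 2 / B := Real.rpow_inv_rpow (by positivity) (by linarith)
  refine ⟨-(1 / γ * B * ((4 - γ) / 4 * s ^ γ)), ?_⟩
  rintro _ ⟨t, ht, rfl⟩
  have key := rpow_le_mul_rpow_add_mul_rpow hγ0.le hγ4.le (by norm_num : (0:ℝ) < 4)
    (by positivity : 0 < s) ht
  simp only [sub_zero, Real.rpow_zero, mul_one, Real.rpow_ofNat, hs] at key
  have hmul := mul_le_mul_of_nonneg_left key (by positivity : 0 ≤ 1 / γ * B)
  have hquartic : 1 / γ * B * (γ / 4 * (lam * A ^ 2 / B) * t ^ 4) = lam / 4 * A ^ 2 * t ^ 4 := by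
    field_simp
  have hquad : 0 ≤ a / 2 * A * t ^ 2 := by positivity
  unfold psi
  linarith

/-- if `0 < λ < Λ₀(A,B)` then `ψ_λ` takes a negative value on `(0,∞)`
and its infimum there is negative; if `λ ≥ Λ₀(A,B)` then `ψ_λ ≥ 0` on `(0,∞)` and the
infimum equals `0`. -/
theorem stmt_10 (a γ A B lam : ℝ) (ha : 0 < a) (hγ2 : 2 < γ) (hγ4 : γ < 4)
    (hA : 0 < A) (hB : 0 < B) (hlam : 0 < lam) :
    (lam < Lam0 a γ A B →
      (∃ t : ℝ, 0 < t ∧ psi a γ A B lam t < 0) ∧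
      sInf (psi a γ A B lam '' Set.Ioi 0) < 0) ∧
    (Lam0 a γ A B ≤ lam →
      (∀ t : ℝ, 0 < t → 0 ≤ psi a γ A B lam t) ∧
      sInf (psi a γ A B lam '' Set.Ioi 0) = 0) := by
  have hT := Tzero_pos ha hγ2 hγ4 hA hB
  refine ⟨fun hlt => ?_, fun hge => ?_⟩
  · have hneg := psi_Tzero_neg ha hγ2 hγ4 hA hB hlt
    have hbdd := bddBelow_psi_image ha.le (by linarith) hγ4 hA hB hlam
    exact ⟨⟨_, hT, hneg⟩, (csInf_le hbdd ⟨_, hT, rfl⟩).trans_lt hneg⟩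
  · have hnn : ∀ t : ℝ, 0 < t → 0 ≤ psi a γ A B lam t :=
      fun _ => psi_nonneg_of_Lam0_le ha hγ2 hγ4 hA hB hge
    have hbdd : 0 ∈ lowerBounds (psi a γ A B lam '' Ioi 0) := by
      rintro _ ⟨t, ht, rfl⟩
      exact hnn t ht
    refine ⟨hnn, le_antisymm ?_ (le_csInf ⟨_, _, hT, rfl⟩ hbdd)⟩
    calc sInf (psi a γ A B lam '' Ioi 0) ≤ psi a γ A B lam 0 :=
          csInf_image_Ioi_le_of_continuousWithinAt
            (continuous_psi a A B lam (by linarith)).continuousWithinAt ⟨0, hbdd⟩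
      _ = 0 := psi_zero a A B lam (by linarith)
end
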